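/- arXiv:2110.14182 — 6 statements merged into one kernel-verified Lean document; each statement's English description precedes it below -/
import Mathlib

section
/- Let K ≥ 2 and w ∈ ℝ^K. Define w_k⁺ = max(0, w_k), w_k⁻ = max(0, −w_k), and the belief mass m_k = e^{−w_k⁻}(e^{w_k⁺} − 1 + ∏_{ℓ≠k}(1 − e^{−w_ℓ⁻})) for each k ∈ {1,…,K}. Then for each fixed k, m_k = 0 if and only if both (i) w_k⁺ = 0 and (ii) there exists ℓ ≠ k with w_ℓ⁻ = 0. -/
open Finset

/-- For `K ≥ 2` and `w ∈ ℝ^K`, with `w⁺ k = max 0 (w k)`,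
`w⁻ k = max 0 (-w k)`, and belief mass
`m k = e^{-w⁻ k} (e^{w⁺ k} - 1 + ∏_{l ≠ k} (1 - e^{-w⁻ l}))`,
we have `m k = 0` iff `w⁺ k = 0` and there exists `l ≠ k` with `w⁻ l = 0`. -/
theorem belief_mass_zero_iff
    (K : ℕ) (hK : 2 ≤ K) (w : Fin K → ℝ)
    (wpos : Fin K → ℝ) (hwpos : ∀ k, wpos k = max 0 (w k))
    (wneg : Fin K → ℝ) (hwneg : ∀ k, wneg k = max 0 (-w k))
    (m : Fin K → ℝ)
    (hm : ∀ k, m k = Real.exp (-wneg k) *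
        (Real.exp (wpos k) - 1 + ∏ l ∈ univ.erase k, (1 - Real.exp (-wneg l))))
    (k : Fin K) :
    m k = 0 ↔ (wpos k = 0 ∧ ∃ l, l ≠ k ∧ wneg l = 0) := by
  have hposnn : ∀ l, 0 ≤ wpos l := fun l => by rw [hwpos]; exact le_max_left _ _
  have hnegnn : ∀ l, 0 ≤ wneg l := fun l => by rw [hwneg]; exact le_max_left _ _
  have hfac : ∀ l, 0 ≤ 1 - Real.exp (-wneg l) := fun l => by
    have : Real.exp (-wneg l) ≤ 1 := by
      rw [Real.exp_le_one_iff]; linarith [hnegnn l]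
    linarith
  have hA : 0 ≤ Real.exp (wpos k) - 1 := by
    have : (1:ℝ) ≤ Real.exp (wpos k) := Real.one_le_exp (hposnn k)
    linarith
  have hB : 0 ≤ ∏ l ∈ univ.erase k, (1 - Real.exp (-wneg l)) :=
    Finset.prod_nonneg fun l _ => hfac l
  rw [hm k, mul_eq_zero]
  constructor
  · rintro (h | h)
    · exact absurd h (Real.exp_ne_zero _)
    · have h1 : Real.exp (wpos k) - 1 = 0 ∧
          (∏ l ∈ univ.erase k, (1 - Real.exp (-wneg l))) = 0 := by
        constructor <;> linarith
      obtain ⟨h2, h3⟩ := h1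
      refine ⟨?_, ?_⟩
      · have : Real.exp (wpos k) = 1 := by linarith
        have := by rwa [Real.exp_eq_one_iff] at this
        exact this
      · obtain ⟨l, hl, hl0⟩ := Finset.prod_eq_zero_iff.mp h3
        refine ⟨l, Finset.ne_of_mem_erase hl, ?_⟩
        have : Real.exp (-wneg l) = 1 := by linarith
        have := by rwa [Real.exp_eq_one_iff] at this
        linarith
  · rintro ⟨h1, l, hl, h2⟩
    right
    have hp : (∏ l ∈ univ.erase k, (1 - Real.exp (-wneg l))) = 0 := by
      apply Finset.prod_eq_zero (Finset.mem_erase.mpr ⟨hl, Finset.mem_univ l⟩)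
      rw [h2]; simp
    rw [h1, hp]; simp
end

section
/- Let K ≥ 2 and w ∈ ℝ^K with Σ_{k=1}^K w_k = 0. Define w_k⁺ = max(0, w_k), w_k⁻ = max(0, −w_k), and the belief mass m_k = e^{−w_k⁻}(e^{w_k⁺} − 1 + ∏_{ℓ≠k}(1 − e^{−w_ℓ⁻})). Then for each k ∈ {1,…,K}, m_k = 0 if and only if w_k ≤ 0; equivalently, m_k ≠ 0 if and only if w_k > 0. -/
open Finset

/-- For `K ≥ 2` and `w ∈ ℝ^K` with `∑ k, w k = 0`, the belief mass
`m k = e^{-w⁻ k} (e^{w⁺ k} - 1 + ∏_{l ≠ k} (1 - e^{-w⁻ l}))` satisfies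
`m k = 0 ↔ w k ≤ 0`, equivalently `m k ≠ 0 ↔ w k > 0`. -/
theorem belief_mass_zero_iff_nonpos
    (K : ℕ) (hK : 2 ≤ K) (w : Fin K → ℝ) (hsum : ∑ k : Fin K, w k = 0)
    (wpos : Fin K → ℝ) (hwpos : ∀ k, wpos k = max 0 (w k))
    (wneg : Fin K → ℝ) (hwneg : ∀ k, wneg k = max 0 (-w k))
    (m : Fin K → ℝ)
    (hm : ∀ k, m k = Real.exp (-wneg k) *
        (Real.exp (wpos k) - 1 + ∏ l ∈ univ.erase k, (1 - Real.exp (-wneg l))))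
    (k : Fin K) :
    (m k = 0 ↔ w k ≤ 0) ∧ (m k ≠ 0 ↔ 0 < w k) := by
  have hsum' : ∑ l ∈ univ.erase k, w l = -w k := by
    have h := Finset.add_sum_erase univ w (Finset.mem_univ k)
    linarith [hsum, h]
  have hzero : w k ≤ 0 → m k = 0 := by
    intro h
    have hp : wpos k = 0 := by rw [hwpos]; exact max_eq_left h
    have hex : ∃ j ∈ univ.erase k, 0 ≤ w j := by
      by_contra hc
      push_neg at hc
      have hne : (univ.erase k).Nonempty := by
        have : 1 ≤ (univ.erase k).card := by
          rw [Finset.card_erase_of_mem (Finset.mem_univ k)]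
          simp only [Finset.card_univ, Fintype.card_fin]
          omega
        exact Finset.card_pos.mp (by omega)
      have := Finset.sum_neg hc hne
      linarith
    obtain ⟨j, hj, hwj⟩ := hex
    have hnj : wneg j = 0 := by
      rw [hwneg]; exact max_eq_left (by linarith)
    have hprod : ∏ l ∈ univ.erase k, (1 - Real.exp (-wneg l)) = 0 :=
      Finset.prod_eq_zero hj (by rw [hnj]; simp)
    rw [hm, hp, hprod]; simp
  have hpos : 0 < w k → 0 < m k := by
    intro h
    have hp : wpos k = w k := by rw [hwpos]; exact max_eq_right h.le
    have hprod : 0 ≤ ∏ l ∈ univ.erase k, (1 - Real.exp (-wneg l)) := by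
      apply Finset.prod_nonneg
      intro l _
      have h0 : 0 ≤ wneg l := by rw [hwneg]; exact le_max_left _ _
      have : Real.exp (-wneg l) ≤ 1 := by
        rw [Real.exp_le_one_iff]; linarith
      linarith
    have h1 : 1 < Real.exp (w k) := by rw [Real.one_lt_exp_iff]; exact h
    rw [hm, hp]
    have := Real.exp_pos (-wneg k)
    nlinarith
  constructor
  · constructor
    · intro h0
      by_contra hc
      push_neg at hc
      exact absurd h0 (ne_of_gt (hpos hc))
    · exact hzero
  · constructor
    · intro h0
      by_contra hc
      push_neg at hc
      exact h0 (hzero hc)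
    · intro h
      exact ne_of_gt (hpos h)
end

section
/- Let K ≥ 2 and v ∈ ℝ^K with mean v̄ = (1/K) Σ_{i=1}^K v_i, and assume v_k ≠ v̄ for every k ∈ {1,…,K}. Set w_k = v_k − v̄, w_k⁺ = max(0, w_k), w_k⁻ = max(0, −w_k), and m_k = e^{−w_k⁻}(e^{w_k⁺} − 1 + ∏_{ℓ≠k}(1 − e^{−w_ℓ⁻})). Then for every k ∈ {1,…,K}, the post-hoc evidential probability 𝟙{m_k ≠ 0}·e^{w_k} / Σ_{ℓ=1}^K 𝟙{m_ℓ ≠ 0}·e^{w_ℓ} equals EvSoftmax(v)_k, and in particular both denominators are nonzero. -/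
/-!
For centred evidence `w` with no zero entry, the belief mass `m_k` vanishes exactly when
`w_k < 0`: then `e^{w_k⁺} - 1 = 0`, and since the `w_ℓ` sum to zero some `w_ℓ` is positive,
so the factor `1 - e^{-w_ℓ⁻} = 0` kills the product. For `w_k > 0` both summands are
nonnegative and the first is positive. Hence the post-hoc evidential probability is the
softmax of `w = v - v̄` masked to `{v_k ≥ v̄}`, which is ev-softmax since a masked softmax is
invariant under shifting its input by a constant.
-/

open Finset

/-- The ev-softmax function:
`EvSoftmax(v)_k = 𝟙{v_k ≥ v̄} e^{v_k} / ∑_l 𝟙{v_l ≥ v̄} e^{v_l}`,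
where `v̄` is the arithmetic mean of `v`. -/
noncomputable def evSoftmax {K : ℕ} (v : Fin K → ℝ) (k : Fin K) : ℝ :=
  (if (∑ i : Fin K, v i) / K ≤ v k then Real.exp (v k) else 0) /
    ∑ l : Fin K, (if (∑ i : Fin K, v i) / K ≤ v l then Real.exp (v l) else 0)

open Real

section MaskedSoftmax

variable {ι : Type*} [Fintype ι] (p : ι → Prop) [DecidablePred p]

noncomputable def maskedSoftmax (v : ι → ℝ) (k : ι) : ℝ :=
  (if p k then exp (v k) else 0) / ∑ l, if p l then exp (v l) else 0

theorem sum_maskedExp_pos (v : ι → ℝ) (h : ∃ l, p l) :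
    0 < ∑ l, if p l then exp (v l) else 0 := by
  obtain ⟨k, hk⟩ := h
  refine sum_pos' (fun l _ => ?_) ⟨k, mem_univ k, by simp [hk, exp_pos]⟩
  split_ifs <;> positivity

theorem maskedSoftmax_sub_const (v : ι → ℝ) (c : ℝ) :
    maskedSoftmax p (fun l => v l - c) = maskedSoftmax p v := by
  have hshift : ∀ l, (if p l then exp (v l - c) else 0) =
      (if p l then exp (v l) else 0) * exp (-c) := by
    intro l
    split_ifs <;> simp [sub_eq_add_neg, exp_add]
  funext k
  simp only [maskedSoftmax, hshift, ← sum_mul]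
  exact mul_div_mul_right _ _ (exp_ne_zero _)

end MaskedSoftmax

section BeliefMass

variable {ι : Type*} [Fintype ι] [DecidableEq ι] {w : ι → ℝ} {k : ι}

noncomputable def beliefMass (w : ι → ℝ) (k : ι) : ℝ :=
  exp (-max 0 (-w k)) *
    (exp (max 0 (w k)) - 1 + ∏ l ∈ univ.erase k, (1 - exp (-max 0 (-w l))))

theorem beliefMass_pos (hk : 0 < w k) : 0 < beliefMass w k := by
  have hprod : 0 ≤ ∏ l ∈ univ.erase k, (1 - exp (-max 0 (-w l))) :=
    prod_nonneg fun l _ => sub_nonneg.2 (exp_le_one_iff.2 (by simp))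
  have hexp : 1 < exp (w k) := one_lt_exp_iff.2 hk
  rw [beliefMass, max_eq_right hk.le]
  exact mul_pos (exp_pos _) (by linarith)

theorem beliefMass_eq_zero {l : ι} (hk : w k ≤ 0) (hlk : l ≠ k) (hl : 0 ≤ w l) :
    beliefMass w k = 0 := by
  have hprod : ∏ l ∈ univ.erase k, (1 - exp (-max 0 (-w l))) = 0 :=
    prod_eq_zero (mem_erase.2 ⟨hlk, mem_univ l⟩) (by simp [max_eq_left (neg_nonpos.2 hl)])
  simp [beliefMass, max_eq_left hk, hprod]

theorem beliefMass_ne_zero_iff (hsum : ∑ l, w l = 0) (hk : w k ≠ 0) :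
    beliefMass w k ≠ 0 ↔ 0 < w k := by
  refine ⟨fun h => ?_, fun h => (beliefMass_pos h).ne'⟩
  by_contra hneg
  obtain ⟨l, -, hl⟩ := exists_pos_of_sum_zero_of_exists_nonzero w hsum ⟨k, mem_univ k, hk⟩
  exact h (beliefMass_eq_zero (not_lt.1 hneg) (by rintro rfl; exact hneg hl) hl.le)

end BeliefMass

/-- If `v ∈ ℝ^K` (`K ≥ 2`) has `v k ≠ v̄` for every `k`, then with
`w k = v k - v̄` and belief masses `m k`, the post-hoc evidential probability
`𝟙{m k ≠ 0} e^{w k} / ∑_l 𝟙{m l ≠ 0} e^{w l}` equals `EvSoftmax(v)_k` for every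
`k`, and both denominators are nonzero. -/
theorem posthoc_evidential_eq_evSoftmax
    (K : ℕ) (hK : 2 ≤ K) (v : Fin K → ℝ)
    (vbar : ℝ) (hvbar : vbar = (∑ i : Fin K, v i) / K)
    (hne : ∀ k, v k ≠ vbar)
    (w : Fin K → ℝ) (hw : ∀ k, w k = v k - vbar)
    (wpos : Fin K → ℝ) (hwpos : ∀ k, wpos k = max 0 (w k))
    (wneg : Fin K → ℝ) (hwneg : ∀ k, wneg k = max 0 (-w k))
    (m : Fin K → ℝ)
    (hm : ∀ k, m k = Real.exp (-wneg k) *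
        (Real.exp (wpos k) - 1 + ∏ l ∈ univ.erase k, (1 - Real.exp (-wneg l)))) :
    (∑ l : Fin K, (if m l ≠ 0 then Real.exp (w l) else 0)) ≠ 0 ∧
    (∑ l : Fin K, (if vbar ≤ v l then Real.exp (v l) else 0)) ≠ 0 ∧
    ∀ k, (if m k ≠ 0 then Real.exp (w k) else 0) /
        (∑ l : Fin K, (if m l ≠ 0 then Real.exp (w l) else 0)) = evSoftmax v k := by
  obtain rfl : m = beliefMass w := funext fun k => by simp only [hm, hwpos, hwneg, beliefMass]
  obtain rfl : w = fun k => v k - vbar := funext hw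
  have hsum : ∑ l, (v l - vbar) = 0 := by
    simp [sum_sub_distrib, hvbar, mul_div_cancel₀ _ (by positivity : (K : ℝ) ≠ 0)]
  have hmask : ∀ l, beliefMass (fun k => v k - vbar) l ≠ 0 ↔ vbar ≤ v l := fun l => by
    rw [beliefMass_ne_zero_iff hsum (sub_ne_zero.2 (hne l)), sub_pos]
    exact ⟨le_of_lt, fun h => h.lt_of_ne' (hne l)⟩
  have hpos : ∃ l, vbar ≤ v l := by
    obtain ⟨l, -, hl⟩ := exists_pos_of_sum_zero_of_exists_nonzero _ hsum
      ⟨⟨0, by omega⟩, mem_univ _, sub_ne_zero.2 (hne _)⟩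
    exact ⟨l, (sub_pos.1 hl).le⟩
  have hev : evSoftmax v = maskedSoftmax (fun l => vbar ≤ v l) v := by subst hvbar; rfl
  simp only [hmask]
  exact ⟨(sum_maskedExp_pos _ _ hpos).ne', (sum_maskedExp_pos _ _ hpos).ne',
    fun k => by rw [hev, ← maskedSoftmax_sub_const _ v vbar]; rfl⟩
end

section
/- Let K be a positive integer and v ∈ ℝ^K. If v_i ≥ v_j for indices i, j ∈ {1,…,K}, then EvSoftmax(v)_i ≥ EvSoftmax(v)_j. -/
open Finset

/-- Monotonicity of ev-softmax: if `v i ≥ v j` then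
`EvSoftmax(v)_i ≥ EvSoftmax(v)_j`. -/
theorem evSoftmax_monotone
    (K : ℕ) (hK : 0 < K) (v : Fin K → ℝ) (i j : Fin K) (hij : v j ≤ v i) :
    evSoftmax v j ≤ evSoftmax v i := by
  have hKpos : (0:ℝ) < K := Nat.cast_pos.mpr hK
  -- there is a maximizing index, whose value is at least the mean
  obtain ⟨m, -, hm⟩ := Finset.exists_max_image Finset.univ v ⟨⟨0, hK⟩, Finset.mem_univ _⟩
  have hmean : (∑ i : Fin K, v i) / K ≤ v m := by
    rw [div_le_iff₀ hKpos]
    calc ∑ i : Fin K, v i ≤ ∑ _i : Fin K, v m :=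
          Finset.sum_le_sum fun k _ => hm k (Finset.mem_univ k)
      _ = v m * K := by simp [mul_comm]
  have hden : 0 < ∑ l : Fin K, (if (∑ i : Fin K, v i) / K ≤ v l then Real.exp (v l) else 0) := by
    apply Finset.sum_pos' (fun l _ => by positivity)
    exact ⟨m, Finset.mem_univ m, by simp [hmean, Real.exp_pos]⟩
  unfold evSoftmax
  apply (div_le_div_iff_of_pos_right hden).mpr
  by_cases hj : (∑ i : Fin K, v i) / K ≤ v j
  · have hi : (∑ i : Fin K, v i) / K ≤ v i := hj.trans hij
    simp [hi, hj, Real.exp_le_exp, hij]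
  · simp only [hj, if_neg, not_false_iff]
    positivity
end

section
/- Let K ≥ 2 and let μ be a probability measure on ℝ^K such that for every k ∈ {1,…,K}, the set {v ∈ ℝ^K : v_k = (1/K) Σ_{i=1}^K v_i} has μ-measure zero. Then for μ-almost every v ∈ ℝ^K, EvSoftmax is differentiable at v with partial derivatives ∂EvSoftmax(v)_i/∂v_j = EvSoftmax(v)_i·(δ_{ij} − EvSoftmax(v)_j) for all i, j ∈ {1,…,K}. -/
/-!
Off the hyperplanes `v_k = v̄` the active set `{k | v̄ ≤ v_k}` is locally constant in `v`, so near
such a `v` ev-softmax coincides with the ordinary softmax restricted to a fixed set `S` and extended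
by zero. That set is nonempty, since the largest coordinate is at least the mean, and the restricted
softmax `p` is smooth with Jacobian `diag p - p pᵀ`.
-/

open Finset MeasureTheory

open Filter Topology Real

variable {ι : Type*} [Fintype ι]

section

variable [DecidableEq ι]

noncomputable def maskedExp (S : Finset ι) (u : ι → ℝ) (i : ι) : ℝ :=
  if i ∈ S then exp (u i) else 0

noncomputable def softmaxOn (S : Finset ι) (u : ι → ℝ) (i : ι) : ℝ :=
  maskedExp S u i / ∑ l, maskedExp S u l

theorem hasFDerivAt_maskedExp (S : Finset ι) (v : ι → ℝ) (i : ι) :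
    HasFDerivAt (fun u => maskedExp S u i)
      (maskedExp S v i • ContinuousLinearMap.proj i : (ι → ℝ) →L[ℝ] ℝ) v := by
  by_cases hi : i ∈ S
  · simpa only [maskedExp, hi, if_true] using (hasFDerivAt_apply i v).exp
  · simpa only [maskedExp, hi, if_false, zero_smul] using hasFDerivAt_const (0 : ℝ) v

theorem sum_maskedExp_pos_s11 {S : Finset ι} (hS : S.Nonempty) (u : ι → ℝ) :
    0 < ∑ l, maskedExp S u l := by
  simp only [maskedExp, sum_ite_mem, univ_inter]
  exact sum_pos (fun l _ => exp_pos (u l)) hS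

theorem hasFDerivAt_softmaxOn {S : Finset ι} (hS : S.Nonempty) (v : ι → ℝ) (i : ι) :
    HasFDerivAt (fun u => softmaxOn S u i)
      (softmaxOn S v i • (ContinuousLinearMap.proj i -
        ∑ j, softmaxOn S v j • ContinuousLinearMap.proj (R := ℝ) (φ := fun _ : ι => ℝ) j)) v := by
  have hZ := sum_maskedExp_pos_s11 hS v
  have hsum := HasFDerivAt.fun_sum (u := univ) fun l _ => hasFDerivAt_maskedExp S v l
  refine ((hasFDerivAt_maskedExp S v i).mul
    ((hasDerivAt_inv hZ.ne').comp_hasFDerivAt v hsum)).congr_fderiv ?_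
  ext w
  simp only [softmaxOn, add_apply, smul_apply, sub_apply, FunLike.coe_sum, Finset.sum_apply,
    ContinuousLinearMap.proj_apply, smul_eq_mul, Function.comp_apply, div_mul_eq_mul_div,
    ← sum_div]
  field_simp
  ring

end

theorem eventually_filter_le_eq {m : (ι → ℝ) → ℝ} {v : ι → ℝ} (hm : ContinuousAt m v)
    (hv : ∀ k, v k ≠ m v) :
    ∀ᶠ u in 𝓝 v, univ.filter (fun k => m u ≤ u k) = univ.filter (fun k => m v ≤ v k) := by
  have hiff (k : ι) : ∀ᶠ u in 𝓝 v, (m u ≤ u k ↔ m v ≤ v k) := by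
    have hcoord : ContinuousAt (fun u : ι → ℝ => u k) v := continuousAt_apply k v
    rcases (hv k).lt_or_gt with hlt | hlt
    · filter_upwards [hcoord.eventually_lt hm hlt] with u hu
      simp only [not_le.2 hu, not_le.2 hlt]
    · filter_upwards [hm.eventually_lt hcoord hlt] with u hu
      simp only [hu.le, hlt.le]
  filter_upwards [eventually_all.2 hiff] with u hu
  ext k
  simp only [mem_filter, mem_univ, true_and, hu k]

theorem exists_sum_div_card_le [Nonempty ι] (v : ι → ℝ) :
    ∃ k, (∑ i, v i) / Fintype.card ι ≤ v k := by
  obtain ⟨k, -, hk⟩ := exists_le_of_sum_le (f := fun _ => (∑ i, v i) / Fintype.card ι) (g := v)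
    univ_nonempty (by simp [card_univ, mul_div_cancel₀])
  exact ⟨k, hk⟩

theorem evSoftmax_eq_softmaxOn {K : ℕ} (u : Fin K → ℝ) :
    evSoftmax u = softmaxOn (univ.filter fun k => (∑ i, u i) / K ≤ u k) u := by
  ext k
  simp only [evSoftmax, softmaxOn, maskedExp, mem_filter, mem_univ, true_and]

theorem evSoftmax_jacobian_ae_general
    (K : ℕ) (μ : Measure (Fin K → ℝ))
    (hμ : ∀ k : Fin K, μ {v | v k = (∑ i : Fin K, v i) / K} = 0) :
    ∀ᵐ v ∂μ,
      (∀ i : Fin K, DifferentiableAt ℝ (fun u : Fin K → ℝ => evSoftmax u i) v) ∧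
      (∀ i j : Fin K,
        fderiv ℝ (fun u : Fin K → ℝ => evSoftmax u i) v (Pi.single j 1)
          = evSoftmax v i * ((if i = j then (1 : ℝ) else 0) - evSoftmax v j)) := by
  have hae : ∀ᵐ v ∂μ, ∀ k : Fin K, v k ≠ (∑ i, v i) / (K : ℝ) :=
    ae_all_iff.2 fun k => measure_eq_zero_iff_ae_notMem.1 (hμ k)
  filter_upwards [hae] with v hv
  set S := univ.filter fun k : Fin K => (∑ i, v i) / K ≤ v k
  have hloc : ∀ᶠ u in 𝓝 v, evSoftmax u = softmaxOn S u := by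
    filter_upwards [eventually_filter_le_eq (m := fun u : Fin K → ℝ => (∑ i, u i) / K)
      (by fun_prop) hv] with u hu
    rw [evSoftmax_eq_softmaxOn, hu]
  have hS (i : Fin K) : S.Nonempty :=
    have : Nonempty (Fin K) := ⟨i⟩
    let ⟨k, hk⟩ := exists_sum_div_card_le v
    ⟨k, by simpa [S] using hk⟩
  have hjac := fun i => (hasFDerivAt_softmaxOn (hS i) v i).congr_of_eventuallyEq
    (hloc.mono fun u hu => congrFun hu i)
  refine ⟨fun i => (hjac i).differentiableAt, fun i j => ?_⟩
  rw [(hjac i).fderiv, hloc.self_of_nhds]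
  simp [Pi.single_apply]

/-- If `μ` is a probability measure on `ℝ^K` (`K ≥ 2`) assigning
measure zero to each hyperplane `{v : v k = v̄}`, then `μ`-almost everywhere
ev-softmax is differentiable with partial derivatives
`∂EvSoftmax(v)_i/∂v_j = EvSoftmax(v)_i (δ_{ij} - EvSoftmax(v)_j)`. -/
theorem evSoftmax_jacobian_ae
    (K : ℕ) (hK : 2 ≤ K)
    (μ : Measure (Fin K → ℝ)) [IsProbabilityMeasure μ]
    (hμ : ∀ k : Fin K, μ {v | v k = (∑ i : Fin K, v i) / K} = 0) :
    ∀ᵐ v ∂μ,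
      (∀ i : Fin K, DifferentiableAt ℝ (fun u : Fin K → ℝ => evSoftmax u i) v) ∧
      (∀ i j : Fin K,
        fderiv ℝ (fun u : Fin K → ℝ => evSoftmax u i) v (Pi.single j 1)
          = evSoftmax v i * ((if i = j then (1 : ℝ) else 0) - evSoftmax v j)) :=
  evSoftmax_jacobian_ae_general K μ hμ
end

section
/- Let K ≥ 2, ε > 0, and let v ∈ ℝ^K satisfy v_k ≠ v̄ for every k ∈ {1,…,K}, where v̄ = (1/K) Σ_{i=1}^K v_i. Then EvSoftmax_{train,ε} is differentiable at v with partial derivatives ∂EvSoftmax_{train,ε}(v)_i/∂v_j = EvSoftmax_{train,ε}(v)_i·(δ_{ij} − EvSoftmax_{train,ε}(v)_j) for all i, j ∈ {1,…,K}, where δ_{ij} is the Kronecker delta. -/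
/-!
Away from the mean, each gate `𝟙{v_k ≥ v̄}` is locally constant, so near `v` the training
ev-softmax coincides with a softmax `c_k e^{u_k} / ∑_l c_l e^{u_l}` with fixed positive weights
`c_k = 𝟙{v_k ≥ v̄} + ε`. The weights drop out of the logarithmic derivative, so its Jacobian is
the usual softmax Jacobian `s_i (δ_ij - s_j)`.
-/

open Finset

/-- The training-time modification of ev-softmax:
`EvSoftmax_{train,ε}(v)_k = (𝟙{v_k ≥ v̄} + ε) e^{v_k} / ∑_l (𝟙{v_l ≥ v̄} + ε) e^{v_l}`,
where `v̄` is the arithmetic mean of `v`. -/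
noncomputable def evSoftmaxTrain {K : ℕ} (ε : ℝ) (v : Fin K → ℝ) (k : Fin K) : ℝ :=
  (((if (∑ i : Fin K, v i) / K ≤ v k then (1 : ℝ) else 0) + ε) * Real.exp (v k)) /
    ∑ l : Fin K, ((if (∑ i : Fin K, v i) / K ≤ v l then (1 : ℝ) else 0) + ε) * Real.exp (v l)

open Filter Topology Real

noncomputable def weightedSoftmax {ι : Type*} [Fintype ι] (c u : ι → ℝ) (i : ι) : ℝ :=
  c i * exp (u i) / ∑ l, c l * exp (u l)

section WeightedSoftmax

variable {ι : Type*} [Fintype ι] {c v : ι → ℝ}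

theorem hasFDerivAt_weightedSoftmax (hS : ∑ l, c l * exp (v l) ≠ 0) (i : ι) :
    HasFDerivAt (fun u => weightedSoftmax c u i)
      (weightedSoftmax c v i • ((ContinuousLinearMap.proj i : (ι → ℝ) →L[ℝ] ℝ) -
        ∑ l, weightedSoftmax c v l • ContinuousLinearMap.proj l)) v := by
  have hexp : ∀ l, HasFDerivAt (fun u : ι → ℝ => c l * exp (u l))
      (c l • exp (v l) • ContinuousLinearMap.proj l) v :=
    fun l => ((hasFDerivAt_apply l v).exp).const_mul (c l)
  have hinv := (hasDerivAt_inv hS).comp_hasFDerivAt v (HasFDerivAt.fun_sum fun l _ => hexp l)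
  have hmul := (hexp i).fun_mul hinv
  simp only [Function.comp_def, ← div_eq_mul_inv] at hmul
  refine hmul.congr_fderiv ?_
  ext w
  simp only [weightedSoftmax, add_apply, smul_apply, sub_apply, FunLike.coe_sum, Finset.sum_apply,
    ContinuousLinearMap.proj_apply, smul_eq_mul, div_mul_eq_mul_div, ← sum_div]
  field_simp
  ring

end WeightedSoftmax

theorem eventually_le_iff_of_ne {X : Type*} [TopologicalSpace X] {f g : X → ℝ} {x : X}
    (hf : ContinuousAt f x) (hg : ContinuousAt g x) (hne : f x ≠ g x) :
    ∀ᶠ y in 𝓝 x, (f y ≤ g y ↔ f x ≤ g x) := by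
  rcases hne.lt_or_gt with hlt | hlt
  · filter_upwards [hf.eventually_lt hg hlt] with y hy
    simp only [hy.le, hlt.le]
  · filter_upwards [hg.eventually_lt hf hlt] with y hy
    simp only [not_le.2 hy, not_le.2 hlt]

section EvGate

variable {K : ℕ}

noncomputable def evGate (ε : ℝ) (v : Fin K → ℝ) (k : Fin K) : ℝ :=
  (if (∑ i : Fin K, v i) / K ≤ v k then (1 : ℝ) else 0) + ε

theorem evSoftmaxTrain_eq_weightedSoftmax (ε : ℝ) (v : Fin K → ℝ) :
    evSoftmaxTrain ε v = weightedSoftmax (evGate ε v) v :=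
  rfl

theorem evGate_pos {ε : ℝ} (hε : 0 < ε) (v : Fin K → ℝ) (k : Fin K) : 0 < evGate ε v k := by
  unfold evGate
  split_ifs <;> linarith

theorem evGate_eventuallyEq (ε : ℝ) {v : Fin K → ℝ} (hne : ∀ k, v k ≠ (∑ i : Fin K, v i) / K) :
    ∀ᶠ u in 𝓝 v, evGate ε u = evGate ε v := by
  have hmean : Continuous fun u : Fin K → ℝ => (∑ i : Fin K, u i) / K := by fun_prop
  filter_upwards [eventually_all.2 fun k => eventually_le_iff_of_ne hmean.continuousAt
    (continuous_apply k).continuousAt (hne k).symm] with u hu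
  funext k
  simp only [evGate, hu k]

theorem evSoftmaxTrain_eventuallyEq (ε : ℝ) {v : Fin K → ℝ}
    (hne : ∀ k, v k ≠ (∑ i : Fin K, v i) / K) (i : Fin K) :
    (fun u => evSoftmaxTrain ε u i) =ᶠ[𝓝 v] fun u => weightedSoftmax (evGate ε v) u i := by
  filter_upwards [evGate_eventuallyEq ε hne] with u hu
  rw [evSoftmaxTrain_eq_weightedSoftmax, hu]

end EvGate

theorem evSoftmaxTrain_jacobian_general
    (K : ℕ) (ε : ℝ) (hε : 0 < ε) (v : Fin K → ℝ)
    (hne : ∀ k, v k ≠ (∑ i : Fin K, v i) / K) :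
    (∀ i : Fin K, DifferentiableAt ℝ (fun u : Fin K → ℝ => evSoftmaxTrain ε u i) v) ∧
    (∀ i j : Fin K,
      fderiv ℝ (fun u : Fin K → ℝ => evSoftmaxTrain ε u i) v (Pi.single j 1)
        = evSoftmaxTrain ε v i *
            ((if i = j then (1 : ℝ) else 0) - evSoftmaxTrain ε v j)) := by
  have hS (i : Fin K) : ∑ l, evGate ε v l * exp (v l) ≠ 0 :=
    (sum_pos (fun l _ => mul_pos (evGate_pos hε v l) (exp_pos _)) ⟨i, mem_univ i⟩).ne'
  have hderiv (i : Fin K) := (hasFDerivAt_weightedSoftmax (hS i) i).congr_of_eventuallyEq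
    (evSoftmaxTrain_eventuallyEq ε hne i)
  refine ⟨fun i => (hderiv i).differentiableAt, fun i j => ?_⟩
  rw [(hderiv i).fderiv, evSoftmaxTrain_eq_weightedSoftmax]
  simp [Pi.single_apply, eq_comm]

/-- For `K ≥ 2`, `ε > 0`, and `v` with `v k ≠ v̄` for all `k`,
`EvSoftmax_{train,ε}` is differentiable at `v` with partial derivatives
`∂EvSoftmax_{train,ε}(v)_i/∂v_j
  = EvSoftmax_{train,ε}(v)_i (δ_{ij} - EvSoftmax_{train,ε}(v)_j)`. -/
theorem evSoftmaxTrain_jacobian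
    (K : ℕ) (hK : 2 ≤ K) (ε : ℝ) (hε : 0 < ε) (v : Fin K → ℝ)
    (hne : ∀ k, v k ≠ (∑ i : Fin K, v i) / K) :
    (∀ i : Fin K, DifferentiableAt ℝ (fun u : Fin K → ℝ => evSoftmaxTrain ε u i) v) ∧
    (∀ i j : Fin K,
      fderiv ℝ (fun u : Fin K → ℝ => evSoftmaxTrain ε u i) v (Pi.single j 1)
        = evSoftmaxTrain ε v i *
            ((if i = j then (1 : ℝ) else 0) - evSoftmaxTrain ε v j)) :=
  evSoftmaxTrain_jacobian_general K ε hε v hne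
end
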